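/- (Barenblatt solutions, singular supercritical case.) Let N ≥ 1, 2N/(N + 1) < p < 2, M > 0 and set λ = N(p − 2) + p, which is positive. There exist constants a, b > 0, depending only on N and p, such that the function B(x, t) := t^{−N/λ}·[ a·M^{p(p−2)/(λ(p−1))} + b·(‖x‖·t^{−1/λ})^{p/(p−1)} ]^{(p−1)/(p−2)} on ℝ^N × (0, ∞) satisfies: (i) at every point (x, t) with t > 0 and x ≠ 0, the identity ∂_t B(x, t) = div_x(‖∇_x B(x,t)‖^{p−2}·∇_x B(x,t)) holds pointwise (the spatial flux field being differentiable there); and (ii) for every bounded continuous φ : ℝ^N → ℝ, ∫_{ℝ^N} B(x, t)·φ(x) dx → M·φ(0) as t → 0⁺. -/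

import Mathlib

/-!
The Barenblatt function is self-similar, `B(x, t) = t^{-N/λ} F(‖x‖ t^{-1/λ})` with profile
`F(ρ) = (c + b ρ^{p/(p-1)})^{(p-1)/(p-2)}`. For `b = (2-p)/p · λ^{-1/(p-1)}` the profile satisfies
the first integral `|F'|^{p-2} F' = -ρ F / λ` of the radial equation, so the flux of `B(·, t)` is
`-(λ t)⁻¹ B(x, t) x`. Its divergence `-(λ t)⁻¹ (N B + x · ∇B)` is `∂ₜ B` by Euler's identity for
self-similar functions.

Substituting `x = t^{1/λ} y` turns `∫ B(x, t) φ(x) dx` into `∫ F(‖y‖) φ(t^{1/λ} y) dy`, which tends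
to `φ(0) ∫ F(‖y‖) dy` by dominated convergence: `F(‖y‖) ≲ (1 + ‖y‖)^{-p/(2-p)}` is integrable
exactly when `λ > 0`. Scaling `y` shows that this mass is `c^{λ(p-1)/(p(p-2))}` times a constant
depending on `N` and `p`, and `a` is chosen to make it `M`.
-/

open MeasureTheory Filter Set

/-- The divergence of a vector field `F : ℝ^N → ℝ^N` at `x`: the trace of its Jacobian. -/
noncomputable def divergence {N : ℕ}
    (F : EuclideanSpace ℝ (Fin N) → EuclideanSpace ℝ (Fin N))
    (x : EuclideanSpace ℝ (Fin N)) : ℝ :=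
  ∑ i, fderiv ℝ F x (EuclideanSpace.single i 1) i

/-- The `p`-Laplacian flux `‖∇f‖^{p-2} ∇f` of a scalar function `f : ℝ^N → ℝ`. -/
noncomputable def pFlux {N : ℕ} (p : ℝ) (f : EuclideanSpace ℝ (Fin N) → ℝ)
    (y : EuclideanSpace ℝ (Fin N)) : EuclideanSpace ℝ (Fin N) :=
  ‖gradient f y‖ ^ (p - 2) • gradient f y

/-- The Barenblatt profile in the singular supercritical case `2N/(N+1) < p < 2`, with
parameters `a, b, M` and `λ = N(p-2) + p`. -/
noncomputable def barenblattSing (N : ℕ) (p a b M : ℝ)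
    (x : EuclideanSpace ℝ (Fin N)) (t : ℝ) : ℝ :=
  t ^ (-(N : ℝ) / ((N : ℝ) * (p - 2) + p)) *
    (a * M ^ (p * (p - 2) / (((N : ℝ) * (p - 2) + p) * (p - 1))) +
        b * (‖x‖ * t ^ ((-1 : ℝ) / ((N : ℝ) * (p - 2) + p))) ^ (p / (p - 1))) ^
      ((p - 1) / (p - 2))

open Topology

section RadialCalculus

variable {F : Type*} [NormedAddCommGroup F] [InnerProductSpace ℝ F]

theorem hasFDerivAt_norm_of_ne_zero {x : F} (hx : x ≠ 0) :
    HasFDerivAt (fun z : F => ‖z‖) (‖x‖⁻¹ • innerSL ℝ x) x := by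
  have h := (hasStrictFDerivAt_norm_sq x).hasFDerivAt.sqrt (by simpa using hx)
  simp only [Real.sqrt_sq (norm_nonneg _)] at h
  convert h using 1
  ext v
  simp
  field_simp

theorem HasDerivAt.hasFDerivAt_comp_norm {g : ℝ → ℝ} {g' : ℝ} {x : F}
    (hg : HasDerivAt g g' ‖x‖) (hx : x ≠ 0) :
    HasFDerivAt (fun z => g ‖z‖) ((g' / ‖x‖) • innerSL ℝ x) x := by
  refine (hg.comp_hasFDerivAt x (hasFDerivAt_norm_of_ne_zero hx)).congr_fderiv ?_
  ext v
  simp [div_eq_mul_inv, mul_assoc]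

theorem HasDerivAt.hasGradientAt_comp_norm [CompleteSpace F] {g : ℝ → ℝ} {g' : ℝ} {x : F}
    (hg : HasDerivAt g g' ‖x‖) (hx : x ≠ 0) :
    HasGradientAt (fun z => g ‖z‖) ((g' / ‖x‖) • x) x := by
  rw [hasGradientAt_iff_hasFDerivAt]
  refine (hg.hasFDerivAt_comp_norm hx).congr_fderiv ?_
  ext v
  simp [InnerProductSpace.toDual_apply_apply]

end RadialCalculus

section EuclideanCalculus

variable {N : ℕ}

theorem pFlux_comp_norm (p : ℝ) {g : ℝ → ℝ} {g' : ℝ} {x : EuclideanSpace ℝ (Fin N)}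
    (hg : HasDerivAt g g' ‖x‖) (hx : x ≠ 0) :
    pFlux p (fun z => g ‖z‖) x = (|g'| ^ (p - 2) * g' / ‖x‖) • x := by
  have hx' : ‖x‖ ≠ 0 := norm_ne_zero_iff.mpr hx
  rw [pFlux, (hg.hasGradientAt_comp_norm hx).gradient, smul_smul, norm_smul, norm_div,
    norm_norm, Real.norm_eq_abs, div_mul_cancel₀ _ hx', mul_div_assoc]

theorem divergence_smul_self {G : EuclideanSpace ℝ (Fin N) → EuclideanSpace ℝ (Fin N)}
    {f : EuclideanSpace ℝ (Fin N) → ℝ} {f' : EuclideanSpace ℝ (Fin N) →L[ℝ] ℝ}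
    {x : EuclideanSpace ℝ (Fin N)} (hG : G =ᶠ[𝓝 x] fun z => f z • z) (hf : HasFDerivAt f f' x) :
    DifferentiableAt ℝ G x ∧ divergence G x = N * f x + f' x := by
  have hsmul : HasFDerivAt (fun z => f z • z)
      (f x • ContinuousLinearMap.id ℝ _ + f'.smulRight x) x := hf.smul (hasFDerivAt_id x)
  refine ⟨hsmul.differentiableAt.congr_of_eventuallyEq hG, ?_⟩
  have hexp : f' x = ∑ i, f' (EuclideanSpace.single i 1) * x i := by
    conv_lhs => rw [← (EuclideanSpace.basisFun (Fin N) ℝ).sum_repr x]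
    simp [mul_comm]
  rw [divergence, hG.fderiv_eq, hsmul.fderiv, hexp]
  simp [Finset.sum_add_distrib]

theorem divergence_radial {G : EuclideanSpace ℝ (Fin N) → EuclideanSpace ℝ (Fin N)}
    {ψ : ℝ → ℝ} {ψ' : ℝ} {x : EuclideanSpace ℝ (Fin N)}
    (hG : G =ᶠ[𝓝 x] fun z => ψ ‖z‖ • z) (hψ : HasDerivAt ψ ψ' ‖x‖) (hx : x ≠ 0) :
    DifferentiableAt ℝ G x ∧ divergence G x = N * ψ ‖x‖ + ‖x‖ * ψ' := by
  obtain ⟨hdiff, hdiv⟩ := divergence_smul_self hG (hψ.hasFDerivAt_comp_norm hx)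
  refine ⟨hdiff, hdiv.trans ?_⟩
  have hx' : ‖x‖ ≠ 0 := norm_ne_zero_iff.mpr hx
  simp
  field_simp

end EuclideanCalculus

noncomputable def selfSimilar {E : Type*} [Norm E] (α β : ℝ) (F : ℝ → ℝ) (x : E) (t : ℝ) : ℝ :=
  t ^ α * F (‖x‖ * t ^ β)

theorem hasDerivAt_selfSimilar {E : Type*} [Norm E] {α β : ℝ} {F : ℝ → ℝ} {F' t : ℝ} (x : E)
    (ht : 0 < t) (hF : HasDerivAt F F' (‖x‖ * t ^ β)) :
    HasDerivAt (selfSimilar α β F x)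
      (t ^ (α - 1) * (α * F (‖x‖ * t ^ β) + β * (‖x‖ * t ^ β) * F')) t := by
  have hin : HasDerivAt (fun s => ‖x‖ * s ^ β) (‖x‖ * (β * t ^ (β - 1))) t :=
    (Real.hasDerivAt_rpow_const (Or.inl ht.ne')).const_mul _
  refine ((Real.hasDerivAt_rpow_const (Or.inl ht.ne')).mul (hF.comp t hin)).congr_deriv ?_
  rw [Real.rpow_sub_one ht.ne', Real.rpow_sub_one ht.ne', Function.comp_apply]
  field_simp

theorem HasDerivAt.const_mul_comp_mul_const {F : ℝ → ℝ} {F' r : ℝ} (c k : ℝ)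
    (hF : HasDerivAt F F' (r * k)) : HasDerivAt (fun s => c * F (s * k)) (c * k * F') r := by
  have hin : HasDerivAt (fun s : ℝ => s * k) (1 * k) r := (hasDerivAt_id' r).mul_const k
  have hF' : HasDerivAt F F' ((fun s : ℝ => s * k) r) := hF
  refine ((hF'.comp r hin).const_mul c).congr_deriv ?_
  ring

theorem abs_rpow_sub_two_mul_of_pos {p k a : ℝ} (hk : 0 < k) :
    |k * a| ^ (p - 2) * (k * a) = k ^ (p - 1) * (|a| ^ (p - 2) * a) := by
  rw [abs_mul, abs_of_pos hk, Real.mul_rpow hk.le (abs_nonneg a),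
    show p - 1 = (p - 2) + 1 by ring, Real.rpow_add_one hk.ne']
  ring

theorem selfSimilar_solves_pLaplace {N : ℕ} {p L : ℝ} {F F' : ℝ → ℝ}
    (hL : L = (N : ℝ) * (p - 2) + p) (hL0 : L ≠ 0) (hF : ∀ ρ, 0 < ρ → HasDerivAt F (F' ρ) ρ)
    (hODE : ∀ ρ, 0 < ρ → |F' ρ| ^ (p - 2) * F' ρ = -(ρ * F ρ / L))
    {x : EuclideanSpace ℝ (Fin N)} {t : ℝ} (ht : 0 < t) (hx : x ≠ 0) :
    DifferentiableAt ℝ (pFlux p (fun z => selfSimilar (-(N : ℝ) / L) ((-1 : ℝ) / L) F z t)) x ∧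
      deriv (selfSimilar (-(N : ℝ) / L) ((-1 : ℝ) / L) F x) t =
        divergence (pFlux p (fun z => selfSimilar (-(N : ℝ) / L) ((-1 : ℝ) / L) F z t)) x := by
  have hρ : ∀ z : EuclideanSpace ℝ (Fin N), z ≠ 0 → 0 < ‖z‖ * t ^ ((-1 : ℝ) / L) := fun z hz =>
    mul_pos (norm_pos_iff.mpr hz) (Real.rpow_pos_of_pos ht _)
  rw [(hasDerivAt_selfSimilar x ht (hF _ (hρ x hx))).deriv]
  simp only [selfSimilar]
  have hflux : ∀ z : EuclideanSpace ℝ (Fin N), z ≠ 0 →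
      pFlux p (fun z => t ^ (-(N : ℝ) / L) * F (‖z‖ * t ^ ((-1 : ℝ) / L))) z =
        (-(t ^ (-(N : ℝ) / L - 1) / L) * F (‖z‖ * t ^ ((-1 : ℝ) / L))) • z := by
    intro z hz
    rw [pFlux_comp_norm p ((hF _ (hρ z hz)).const_mul_comp_mul_const _ _) hz]
    congr 1
    have hz' : ‖z‖ ≠ 0 := norm_ne_zero_iff.mpr hz
    -- `(N + 1)(p - 1) + 1 = N + λ` makes the time exponent of the flux `-N/λ - 1`.
    have hexp : t ^ ((-(N : ℝ) / L + (-1 : ℝ) / L) * (p - 1)) * t ^ ((-1 : ℝ) / L) =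
        t ^ (-(N : ℝ) / L - 1) := by
      rw [← Real.rpow_add ht]
      congr 1
      field_simp
      rw [hL]
      ring
    rw [abs_rpow_sub_two_mul_of_pos (by positivity), hODE _ (hρ z hz), ← Real.rpow_add ht,
      ← Real.rpow_mul ht.le, ← hexp]
    field_simp
  have hψ := (hF _ (hρ x hx)).const_mul_comp_mul_const (-(t ^ (-(N : ℝ) / L - 1) / L))
    (t ^ ((-1 : ℝ) / L))
  obtain ⟨hdiff, hdiv⟩ := divergence_radial
    (by filter_upwards [isOpen_compl_singleton.mem_nhds hx] with z hz using hflux z hz) hψ hx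
  refine ⟨hdiff, ?_⟩
  rw [hdiv]
  field_simp

noncomputable def barenblattProfile (p c b ρ : ℝ) : ℝ :=
  (c + b * ρ ^ (p / (p - 1))) ^ ((p - 1) / (p - 2))

noncomputable def barenblattProfileDeriv (p c b ρ : ℝ) : ℝ :=
  p / (p - 2) * b * ρ ^ (1 / (p - 1)) * (c + b * ρ ^ (p / (p - 1))) ^ (1 / (p - 2))

noncomputable def barenblattCoeff (N : ℕ) (p : ℝ) : ℝ :=
  (2 - p) / p * ((N : ℝ) * (p - 2) + p) ^ (-1 / (p - 1))

section Profile

variable {p c b ρ : ℝ}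

theorem hasDerivAt_barenblattProfile (hp₁ : p ≠ 1) (hp₂ : p ≠ 2) (hc : 0 < c) (hb : 0 ≤ b)
    (hρ : 0 < ρ) : HasDerivAt (barenblattProfile p c b) (barenblattProfileDeriv p c b ρ) ρ := by
  have hV : 0 < c + b * ρ ^ (p / (p - 1)) := by positivity
  have hin : HasDerivAt (fun ρ => c + b * ρ ^ (p / (p - 1)))
      (b * (p / (p - 1) * ρ ^ (p / (p - 1) - 1))) ρ :=
    ((Real.hasDerivAt_rpow_const (Or.inl hρ.ne')).const_mul b).const_add c
  refine ((Real.hasDerivAt_rpow_const (Or.inl hV.ne')).comp ρ hin).congr_deriv ?_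
  have h1 : p / (p - 1) - 1 = 1 / (p - 1) := by
    field_simp [sub_ne_zero.mpr hp₁]
    ring
  have h2 : (p - 1) / (p - 2) - 1 = 1 / (p - 2) := by
    field_simp [sub_ne_zero.mpr hp₂]
    ring
  rw [h1, h2, barenblattProfileDeriv]
  field_simp [sub_ne_zero.mpr hp₁]

theorem barenblattProfile_ode (hp₁ : 1 < p) (hp₂ : p < 2) (hc : 0 < c) (hb : 0 < b)
    (hρ : 0 < ρ) :
    |barenblattProfileDeriv p c b ρ| ^ (p - 2) * barenblattProfileDeriv p c b ρ =
      -((p * b / (2 - p)) ^ (p - 1) * (ρ * barenblattProfile p c b ρ)) := by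
  have hV : 0 < c + b * ρ ^ (p / (p - 1)) := by positivity
  have : 0 < 2 - p := by linarith
  set A := p * b / (2 - p) * ρ ^ (1 / (p - 1)) * (c + b * ρ ^ (p / (p - 1))) ^ (1 / (p - 2))
  have hA : 0 < A := by positivity
  have hderiv : barenblattProfileDeriv p c b ρ = -A := by
    rw [barenblattProfileDeriv, show p / (p - 2) = -(p / (2 - p)) by rw [← div_neg, neg_sub]]
    ring
  have hApow : A ^ (p - 1) = (p * b / (2 - p)) ^ (p - 1) * (ρ * barenblattProfile p c b ρ) := by
    rw [Real.mul_rpow (by positivity) (by positivity),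
      Real.mul_rpow (by positivity) (by positivity), ← Real.rpow_mul hρ.le,
      ← Real.rpow_mul hV.le, one_div_mul_cancel (by linarith), Real.rpow_one,
      barenblattProfile, one_div_mul_eq_div, mul_assoc]
  rw [hderiv, abs_neg, abs_of_pos hA, mul_neg, ← hApow, show p - 1 = (p - 2) + 1 by ring,
    Real.rpow_add_one hA.ne']

theorem barenblattCoeff_pos {N : ℕ} (hp₀ : 0 < p) (hp₂ : p < 2) (hL : 0 < (N : ℝ) * (p - 2) + p) :
    0 < barenblattCoeff N p := by
  have : 0 < 2 - p := by linarith
  unfold barenblattCoeff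
  positivity

theorem barenblattCoeff_rpow {N : ℕ} (hp₁ : 1 < p) (hp₂ : p < 2)
    (hL : 0 < (N : ℝ) * (p - 2) + p) :
    (p * barenblattCoeff N p / (2 - p)) ^ (p - 1) = ((N : ℝ) * (p - 2) + p)⁻¹ := by
  have : 2 - p ≠ 0 := by linarith
  have : p ≠ 0 := by linarith
  rw [barenblattCoeff, show p * ((2 - p) / p * ((N : ℝ) * (p - 2) + p) ^ (-1 / (p - 1))) / (2 - p)
      = ((N : ℝ) * (p - 2) + p) ^ (-1 / (p - 1)) by field_simp, ← Real.rpow_mul hL.le,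
    div_mul_cancel₀ _ (by linarith), Real.rpow_neg_one]

end Profile

section Integrals

open Module

variable {E : Type*} [NormedAddCommGroup E] [NormedSpace ℝ E] [FiniteDimensional ℝ E]
  [MeasurableSpace E] [BorelSpace E] (μ : Measure E) [μ.IsAddHaarMeasure]

theorem integrable_rpow_add_mul_norm_rpow {c b q m : ℝ} (hc : 0 < c) (hb : 0 < b) (hq : 0 < q)
    (hqm : (finrank ℝ E : ℝ) < -(q * m)) : Integrable (fun y : E => (c + b * ‖y‖ ^ q) ^ m) μ := by
  have hm : m < 0 := by
    have : (0 : ℝ) < -(q * m) := lt_of_le_of_lt (Nat.cast_nonneg _) hqm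
    nlinarith
  set ε := min c b
  have hε : 0 < ε := lt_min hc hb
  have hcont : Continuous (fun y : E => (c + b * ‖y‖ ^ q) ^ m) :=
    (continuous_const.add (continuous_const.mul (continuous_norm.rpow_const fun _ =>
      Or.inr hq.le))).rpow_const fun y => Or.inl (by positivity : 0 < c + b * ‖y‖ ^ q).ne'
  refine ((integrable_one_add_norm hqm).const_mul (ε ^ m * 2 ^ (-(q * m)))).mono'
    hcont.aestronglyMeasurable (Eventually.of_forall fun y => ?_)
  have hlower : ε * ((1 + ‖y‖) / 2) ^ q ≤ c + b * ‖y‖ ^ q := by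
    have hmax : ((1 + ‖y‖) / 2) ^ q ≤ 1 + ‖y‖ ^ q := by
      rcases le_total ‖y‖ 1 with h | h
      · have := Real.rpow_le_one (by positivity) (by linarith) hq.le (x := (1 + ‖y‖) / 2)
        linarith [Real.rpow_nonneg (norm_nonneg y) q]
      · have := Real.rpow_le_rpow (by positivity) (by linarith : (1 + ‖y‖) / 2 ≤ ‖y‖) hq.le
        linarith
    have := Real.rpow_nonneg (norm_nonneg y) q
    nlinarith [min_le_left c b, min_le_right c b, mul_le_mul_of_nonneg_left hmax hε.le]
  rw [Real.norm_of_nonneg (by positivity)]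
  calc (c + b * ‖y‖ ^ q) ^ m ≤ (ε * ((1 + ‖y‖) / 2) ^ q) ^ m :=
        Real.rpow_le_rpow_of_nonpos (by positivity) hlower hm.le
    _ = ε ^ m * 2 ^ (-(q * m)) * (1 + ‖y‖) ^ (-(-(q * m))) := by
        rw [Real.mul_rpow hε.le (by positivity), ← Real.rpow_mul (by positivity),
          Real.div_rpow (by positivity) zero_le_two, neg_neg, Real.rpow_neg zero_le_two]
        ring

theorem integral_rpow_add_mul_norm_rpow {c b q m : ℝ} (hc : 0 < c) (hb : 0 < b) (hq : 0 < q) :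
    ∫ y, (c + b * ‖y‖ ^ q) ^ m ∂μ =
      (c / b) ^ ((finrank ℝ E : ℝ) / q) * c ^ m * ∫ y, (1 + ‖y‖ ^ q) ^ m ∂μ := by
  set R := (c / b) ^ (1 / q)
  have hR : 0 < R := by positivity
  have hRq : R ^ q = c / b := by
    rw [← Real.rpow_mul (by positivity), one_div_mul_cancel hq.ne', Real.rpow_one]
  have hpt : ∀ y : E, (c + b * ‖y‖ ^ q) ^ m = c ^ m * (1 + ‖R⁻¹ • y‖ ^ q) ^ m := by
    intro y
    rw [← Real.mul_rpow hc.le (by positivity), norm_smul, Real.norm_of_nonneg (by positivity),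
      Real.mul_rpow (by positivity) (norm_nonneg y), Real.inv_rpow hR.le, hRq]
    field_simp
  simp_rw [hpt]
  rw [integral_const_mul,
    Measure.integral_comp_inv_smul_of_nonneg μ (fun y => (1 + ‖y‖ ^ q) ^ m) hR.le, smul_eq_mul,
    ← Real.rpow_natCast, ← Real.rpow_mul (by positivity), one_div_mul_eq_div]
  ring

theorem tendsto_integral_inv_smul_mul {f φ : E → ℝ} (hf : Integrable f μ) (hφ : Continuous φ)
    {K : ℝ} (hK : ∀ x, |φ x| ≤ K) :
    Tendsto (fun ε : ℝ => ∫ x, (ε ^ finrank ℝ E)⁻¹ * f (ε⁻¹ • x) * φ x ∂μ) (𝓝[>] 0)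
      (𝓝 ((∫ x, f x ∂μ) * φ 0)) := by
  have hrescale : ∀ ε : ℝ, 0 < ε →
      ∫ x, (ε ^ finrank ℝ E)⁻¹ * f (ε⁻¹ • x) * φ x ∂μ = ∫ y, f y * φ (ε • y) ∂μ := by
    intro ε hε
    have h := Measure.integral_comp_smul_of_nonneg μ
      (fun x => (ε ^ finrank ℝ E)⁻¹ * f (ε⁻¹ • x) * φ x) ε (hR := hε.le)
    simp only [smul_smul, inv_mul_cancel₀ hε.ne', one_smul, smul_eq_mul, mul_assoc,
      integral_const_mul] at h
    simp only [mul_assoc, integral_const_mul]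
    exact (mul_left_cancel₀ (by positivity) h).symm
  have hlim : Tendsto (fun ε : ℝ => ∫ y, f y * φ (ε • y) ∂μ) (𝓝[>] 0)
      (𝓝 (∫ y, f y * φ 0 ∂μ)) := by
    refine tendsto_integral_filter_of_dominated_convergence (fun y => |f y| * K)
      (Eventually.of_forall fun ε => hf.aestronglyMeasurable.mul
        (hφ.comp (continuous_const_smul ε)).aestronglyMeasurable)
      (Eventually.of_forall fun ε => Eventually.of_forall fun y => ?_) (hf.abs.mul_const K)
      (Eventually.of_forall fun y => ?_)
    · rw [norm_mul, Real.norm_eq_abs, Real.norm_eq_abs]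
      exact mul_le_mul_of_nonneg_left (hK _) (abs_nonneg _)
    · refine tendsto_const_nhds.mul ((hφ.tendsto 0).comp ?_)
      exact ((continuous_id.smul continuous_const).tendsto' 0 0 (zero_smul ℝ y)).mono_left
        nhdsWithin_le_nhds
  rw [integral_mul_const] at hlim
  exact hlim.congr' (eventually_nhdsWithin_of_forall fun ε hε => (hrescale ε hε).symm)

theorem tendsto_integral_selfSimilar_mul {L : ℝ} (hL : 0 < L) {F : ℝ → ℝ}
    (hF : Integrable (fun y : E => F ‖y‖) μ) {φ : E → ℝ} (hφ : Continuous φ) {K : ℝ}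
    (hK : ∀ x, |φ x| ≤ K) :
    Tendsto (fun t => ∫ x, selfSimilar (-(finrank ℝ E : ℝ) / L) ((-1 : ℝ) / L) F x t * φ x ∂μ)
      (𝓝[>] 0) (𝓝 ((∫ y, F ‖y‖ ∂μ) * φ 0)) := by
  have hscale : Tendsto (fun t : ℝ => t ^ (1 / L)) (𝓝[>] 0) (𝓝[>] 0) := by
    refine tendsto_nhdsWithin_iff.mpr ⟨?_, eventually_nhdsWithin_of_forall fun t ht =>
      Real.rpow_pos_of_pos ht _⟩
    have := Real.continuousAt_rpow_const 0 (1 / L) (Or.inr (by positivity))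
    rw [ContinuousAt, Real.zero_rpow (by positivity)] at this
    exact this.mono_left nhdsWithin_le_nhds
  refine ((tendsto_integral_inv_smul_mul μ hF hφ hK).comp hscale).congr'
    (eventually_nhdsWithin_of_forall fun t ht => integral_congr_ae (ae_of_all _ fun x => ?_))
  have ht : 0 < t := ht
  simp only [selfSimilar]
  rw [norm_smul, Real.norm_of_nonneg (by positivity), ← Real.rpow_natCast,
    ← Real.rpow_mul ht.le, ← Real.rpow_neg ht.le, ← Real.rpow_neg ht.le, one_div_mul_eq_div,
    ← neg_div, ← neg_div, mul_comm (t ^ _) ‖x‖]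

noncomputable def barenblattAmplitude (p b : ℝ) : ℝ :=
  (b ^ ((finrank ℝ E : ℝ) * (p - 1) / p) /
      ∫ y, barenblattProfile p 1 1 ‖y‖ ∂μ) ^
    (p * (p - 2) / (((finrank ℝ E : ℝ) * (p - 2) + p) * (p - 1)))

variable {p : ℝ}

theorem integrable_barenblattProfile_norm (hp₁ : 1 < p) (hp₂ : p < 2)
    (hL : 0 < (finrank ℝ E : ℝ) * (p - 2) + p) {c b : ℝ} (hc : 0 < c) (hb : 0 < b) :
    Integrable (fun y : E => barenblattProfile p c b ‖y‖) μ := by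
  refine integrable_rpow_add_mul_norm_rpow μ hc hb (by positivity) ?_
  have hqm : -(p / (p - 1) * ((p - 1) / (p - 2))) = p / (2 - p) := by
    have : p - 1 ≠ 0 := by linarith
    have : p - 2 ≠ 0 := by linarith
    have : 2 - p ≠ 0 := by linarith
    field_simp
    ring
  rw [hqm, lt_div_iff₀ (by linarith)]
  linarith

theorem integral_barenblattProfile_norm_pos (hp₁ : 1 < p) (hp₂ : p < 2)
    (hL : 0 < (finrank ℝ E : ℝ) * (p - 2) + p) {c b : ℝ} (hc : 0 < c) (hb : 0 < b) :
    0 < ∫ y, barenblattProfile p c b ‖y‖ ∂μ := by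
  refine (integral_pos_iff_support_of_nonneg (fun y => by unfold barenblattProfile; positivity)
    (integrable_barenblattProfile_norm μ hp₁ hp₂ hL hc hb)).mpr ?_
  rw [Function.support_eq_univ fun y => by unfold barenblattProfile; positivity]
  exact isOpen_univ.measure_pos μ univ_nonempty

theorem barenblattAmplitude_pos (hp₁ : 1 < p) (hp₂ : p < 2)
    (hL : 0 < (finrank ℝ E : ℝ) * (p - 2) + p) {b : ℝ} (hb : 0 < b) :
    0 < barenblattAmplitude μ p b := by
  have := integral_barenblattProfile_norm_pos μ hp₁ hp₂ hL one_pos one_pos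
  unfold barenblattAmplitude
  positivity

theorem integral_barenblattProfile_norm (hp₁ : 1 < p) (hp₂ : p < 2)
    (hL : 0 < (finrank ℝ E : ℝ) * (p - 2) + p) {b M : ℝ} (hb : 0 < b) (hM : 0 < M) :
    ∫ y, barenblattProfile p (barenblattAmplitude μ p b *
        M ^ (p * (p - 2) / (((finrank ℝ E : ℝ) * (p - 2) + p) * (p - 1)))) b ‖y‖ ∂μ = M := by
  have : p - 1 ≠ 0 := by linarith
  have : p - 2 ≠ 0 := by linarith
  set γ := p * (p - 2) / (((finrank ℝ E : ℝ) * (p - 2) + p) * (p - 1))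
  set I := ∫ y, barenblattProfile p 1 1 ‖y‖ ∂μ
  have hI : 0 < I := integral_barenblattProfile_norm_pos μ hp₁ hp₂ hL one_pos one_pos
  have hγ : γ ≠ 0 := by positivity
  set c := barenblattAmplitude μ p b * M ^ γ
  have hc : c = (b ^ ((finrank ℝ E : ℝ) * (p - 1) / p) / I * M) ^ γ := by
    rw [Real.mul_rpow (by positivity) hM.le]
    rfl
  have hc₀ : 0 < c := by rw [hc]; positivity
  have hexp : (finrank ℝ E : ℝ) / (p / (p - 1)) + (p - 1) / (p - 2) = γ⁻¹ := by
    have : p ≠ 0 := by linarith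
    have : (finrank ℝ E : ℝ) * (p - 2) + p ≠ 0 := hL.ne'
    simp only [γ, inv_div]
    field_simp
  have hI' : I = ∫ y, (1 + ‖y‖ ^ (p / (p - 1))) ^ ((p - 1) / (p - 2)) ∂μ := by
    simp only [I, barenblattProfile, one_mul]
  unfold barenblattProfile
  rw [integral_rpow_add_mul_norm_rpow μ hc₀ hb (by positivity), ← hI', Real.div_rpow hc₀.le hb.le,
    div_mul_eq_mul_div, ← Real.rpow_add hc₀, hexp, hc, Real.rpow_rpow_inv (by positivity) hγ,
    div_div_eq_mul_div]
  field_simp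

end Integrals

theorem one_lt_and_pos_of_two_mul_div_lt {N : ℕ} (hN : 1 ≤ N) {p : ℝ}
    (hp : 2 * (N : ℝ) / ((N : ℝ) + 1) < p) : 1 < p ∧ 0 < (N : ℝ) * (p - 2) + p := by
  have hN' : (1 : ℝ) ≤ N := by exact_mod_cast hN
  rw [div_lt_iff₀ (by linarith)] at hp
  constructor <;> nlinarith

/-- Barenblatt solutions of the singular supercritical parabolic `p`-Laplace equation,
`2N/(N+1) < p < 2` (so that `λ = N(p-2) + p > 0`): there exist `a, b > 0` depending only
on `N` and `p` such that for each mass `M > 0` the Barenblatt profile solves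
`∂ₜ B = div(‖∇B‖^{p-2} ∇B)` pointwise away from `x = 0`, and `B(·, t) ⇀ M δ₀`
as `t → 0⁺`. -/
theorem barenblatt_singular (N : ℕ) (hN : 1 ≤ N) (p : ℝ)
    (hp₁ : 2 * (N : ℝ) / ((N : ℝ) + 1) < p) (hp₂ : p < 2) :
    (0 : ℝ) < (N : ℝ) * (p - 2) + p ∧
    ∃ a : ℝ, 0 < a ∧ ∃ b : ℝ, 0 < b ∧
      ∀ M : ℝ, 0 < M →
        -- (i) the equation holds pointwise away from the origin
        (∀ (x : EuclideanSpace ℝ (Fin N)) (t : ℝ), 0 < t → x ≠ 0 →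
          DifferentiableAt ℝ (pFlux p (fun z => barenblattSing N p a b M z t)) x ∧
            deriv (fun s => barenblattSing N p a b M x s) t =
              divergence (pFlux p (fun z => barenblattSing N p a b M z t)) x) ∧
        -- (ii) the initial datum is `M δ₀` in the sense of measures
        (∀ φ : EuclideanSpace ℝ (Fin N) → ℝ, Continuous φ → (∃ K : ℝ, ∀ x, |φ x| ≤ K) →
          Tendsto (fun t => ∫ x, barenblattSing N p a b M x t * φ x)
            (nhdsWithin 0 (Ioi (0 : ℝ))) (nhds (M * φ 0))) := by
  obtain ⟨hp, hL⟩ := one_lt_and_pos_of_two_mul_div_lt hN hp₁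
  have hdim : (Module.finrank ℝ (EuclideanSpace ℝ (Fin N)) : ℝ) = N := by simp
  have hL' : 0 < (Module.finrank ℝ (EuclideanSpace ℝ (Fin N)) : ℝ) * (p - 2) + p := hdim ▸ hL
  have hb := barenblattCoeff_pos (N := N) (by linarith) hp₂ hL
  have ha := barenblattAmplitude_pos (volume : Measure (EuclideanSpace ℝ (Fin N))) hp hp₂ hL' hb
  refine ⟨hL, _, ha, _, hb, fun M hM => ?_⟩
  have hc : 0 < barenblattAmplitude (volume : Measure (EuclideanSpace ℝ (Fin N))) p
      (barenblattCoeff N p) * M ^ (p * (p - 2) / (((N : ℝ) * (p - 2) + p) * (p - 1))) := by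
    positivity
  -- `barenblattSing N p a b M` unfolds to `selfSimilar (-N/λ) (-1/λ) (barenblattProfile p c b)`.
  refine ⟨fun x t ht hx => ?_, fun φ hφ ⟨K, hK⟩ => ?_⟩
  · exact selfSimilar_solves_pLaplace rfl hL.ne'
      (fun ρ hρ => hasDerivAt_barenblattProfile hp.ne' hp₂.ne hc hb.le hρ)
      (fun ρ hρ => by rw [barenblattProfile_ode hp hp₂ hc hb hρ, barenblattCoeff_rpow hp hp₂ hL,
        inv_mul_eq_div]) ht hx
  · have hmass := integral_barenblattProfile_norm volume hp hp₂ hL' hb hM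
    have hlim := tendsto_integral_selfSimilar_mul volume hL
      (integrable_barenblattProfile_norm volume hp hp₂ hL' hc hb) hφ hK
    rw [hdim] at hmass hlim
    rwa [hmass] at hlim
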